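/- arXiv:2003.06511 — 2 statements merged into one kernel-verified Lean document; each statement's English description precedes it below -/
import Mathlib

section
/- Let 𝒳 be a nonempty finite set, let P1, P2 be full-support probability distributions on 𝒳 and let r' > 0. Then the function t ↦ (r'/t) · D( t·P1 + (1−t)·P2 ‖ ( r'·(t·P1 + (1−t)·P2) + t·P2 ) / (t + r') ) is monotonically nondecreasing on the interval (0,1). -/
/-!
Write `Q u = u • P1 + (1 - u) • P2`; the divergence in question is `D(Q t ‖ Q λ(t))` with
`λ(t) = r' t / (t + r')`. Both steps of the comparison `s < t` are instances of the convexity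
bound `D(θ A + (1 - θ) C ‖ θ B + (1 - θ) C) ≤ θ D(A ‖ B)`: shrinking the pair towards `P2 = Q 0`
by the factor `θ = s / t` gives `D(Q s ‖ Q μ) ≤ (s / t) D(Q t ‖ Q λ(t))` with
`μ = r' s / (t + r') < λ(s) < s`, and `Q λ(s)` is a convex combination of `Q μ` and `Q s`, so
`D(Q s ‖ Q λ(s)) ≤ D(Q s ‖ Q μ)` by the same bound and Gibbs' inequality.
-/

namespace StmtNS

variable {X : Type*} [Fintype X]

/-- `P` is a probability distribution on the finite set `X`. -/
def IsProbDist (P : X → ℝ) : Prop := (∀ x, 0 ≤ P x) ∧ (∑ x, P x) = 1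

/-- Kullback–Leibler divergence `D(P‖Q) = ∑_{x : P(x) > 0} P(x) log (P(x)/Q(x))`. -/
noncomputable def KL (P Q : X → ℝ) : ℝ :=
  ∑ x, if 0 < P x then P x * Real.log (P x / Q x) else 0

/-- Generalized Jensen–Shannon divergence. -/
noncomputable def GJS (Q Qt : X → ℝ) (a : ℝ) : ℝ :=
  a * KL Q (fun x => (a * Q x + Qt x) / (a + 1)) +
    KL Qt (fun x => (a * Q x + Qt x) / (a + 1))

open Real Set

theorem KL_eq_sum_of_pos {P : X → ℝ} (hP : ∀ x, 0 < P x) (Q : X → ℝ) :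
    KL P Q = ∑ x, P x * log (P x / Q x) :=
  Finset.sum_congr rfl fun x _ => if_pos (hP x)

theorem sub_le_mul_log_div {p q : ℝ} (hp : 0 < p) (hq : 0 < q) : p - q ≤ p * log (p / q) := by
  have h := one_sub_inv_le_log_of_pos (div_pos hp hq)
  calc p - q = p * (1 - (p / q)⁻¹) := by field_simp
    _ ≤ p * log (p / q) := mul_le_mul_of_nonneg_left h hp.le

theorem KL_nonneg {P Q : X → ℝ} (hP : ∀ x, 0 < P x) (hQ : ∀ x, 0 < Q x)
    (hsum : ∑ x, Q x ≤ ∑ x, P x) : 0 ≤ KL P Q := by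
  rw [KL_eq_sum_of_pos hP]
  calc 0 ≤ ∑ x, (P x - Q x) := by rw [Finset.sum_sub_distrib]; linarith
    _ ≤ _ := Finset.sum_le_sum fun x _ => sub_le_mul_log_div (hP x) (hQ x)

theorem add_mul_log_add_div_add_le {a c e : ℝ} (ha : 0 < a) (hc : 0 < c) (he : 0 ≤ e) :
    (a + e) * log ((a + e) / (c + e)) ≤ a * log (a / c) := by
  have hshift : log ((a + e) / (c + e)) - log (a / c) ≤ (a + e) * c / ((c + e) * a) - 1 := by
    rw [← log_div (by positivity) (by positivity)]
    convert log_le_sub_one_of_pos (show 0 < (a + e) * c / ((c + e) * a) by positivity) using 2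
    field_simp
  have hratio : log ((a + e) / (c + e)) ≤ (a + e) / (c + e) - 1 :=
    log_le_sub_one_of_pos (by positivity)
  have hcancel : a * ((a + e) * c / ((c + e) * a) - 1) + e * ((a + e) / (c + e) - 1) = 0 := by
    field_simp
    ring
  nlinarith [mul_le_mul_of_nonneg_left hshift ha.le, mul_le_mul_of_nonneg_left hratio he]

theorem KL_convex_comb_le {A B C : X → ℝ} (hA : ∀ x, 0 < A x) (hB : ∀ x, 0 < B x)
    (hC : ∀ x, 0 ≤ C x) {θ : ℝ} (hθ₀ : 0 < θ) (hθ₁ : θ ≤ 1) :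
    KL (fun x => θ * A x + (1 - θ) * C x) (fun x => θ * B x + (1 - θ) * C x) ≤ θ * KL A B := by
  have hC' : ∀ x, 0 ≤ (1 - θ) * C x := fun x => mul_nonneg (sub_nonneg.2 hθ₁) (hC x)
  rw [KL_eq_sum_of_pos fun x => add_pos_of_pos_of_nonneg (mul_pos hθ₀ (hA x)) (hC' x),
    KL_eq_sum_of_pos hA, Finset.mul_sum]
  refine Finset.sum_le_sum fun x _ => ?_
  calc _ ≤ θ * A x * log (θ * A x / (θ * B x)) :=
        add_mul_log_add_div_add_le (mul_pos hθ₀ (hA x)) (mul_pos hθ₀ (hB x)) (hC' x)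
    _ = θ * (A x * log (A x / B x)) := by rw [mul_div_mul_left _ _ hθ₀.ne', mul_assoc]

def mixture (P1 P2 : X → ℝ) (u : ℝ) : X → ℝ := fun x => u * P1 x + (1 - u) * P2 x

section Mixture

variable {P1 P2 : X → ℝ}

theorem mixture_pos {Y : Type*} {P1 P2 : Y → ℝ} (hP1 : ∀ x, 0 < P1 x) (hP2 : ∀ x, 0 < P2 x)
    {u : ℝ} (hu : u ∈ Icc 0 1) (x : Y) : 0 < mixture P1 P2 u x := by
  rcases hu.1.eq_or_lt with rfl | hu₀
  · simpa only [mixture, zero_mul, sub_zero, one_mul, zero_add] using hP2 x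
  · exact add_pos_of_pos_of_nonneg (mul_pos hu₀ (hP1 x))
      (mul_nonneg (sub_nonneg.2 hu.2) (hP2 x).le)

theorem sum_mixture (hsum : ∑ x, P1 x = ∑ x, P2 x) (u : ℝ) :
    ∑ x, mixture P1 P2 u x = ∑ x, P2 x := by
  simp only [mixture, Finset.sum_add_distrib, ← Finset.mul_sum, hsum]
  ring

theorem mixture_convex_comb {Y : Type*} (P1 P2 : Y → ℝ) (θ a c : ℝ) (x : Y) :
    θ * mixture P1 P2 a x + (1 - θ) * mixture P1 P2 c x
      = mixture P1 P2 (θ * a + (1 - θ) * c) x := by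
  simp only [mixture]
  ring

theorem KL_mixture_le (hP1 : ∀ x, 0 < P1 x) (hP2 : ∀ x, 0 < P2 x) {a b c θ u v : ℝ}
    (ha : a ∈ Icc 0 1) (hb : b ∈ Icc 0 1) (hc : c ∈ Icc 0 1) (hθ₀ : 0 < θ) (hθ₁ : θ ≤ 1)
    (hu : θ * a + (1 - θ) * c = u) (hv : θ * b + (1 - θ) * c = v) :
    KL (mixture P1 P2 u) (mixture P1 P2 v) ≤ θ * KL (mixture P1 P2 a) (mixture P1 P2 b) := by
  have h := KL_convex_comb_le (mixture_pos hP1 hP2 ha) (mixture_pos hP1 hP2 hb)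
    (fun x => (mixture_pos hP1 hP2 hc x).le) hθ₀ hθ₁
  simpa only [mixture_convex_comb, hu, hv] using h

theorem monotoneOn_div_mul_KL_mixture (hP1 : ∀ x, 0 < P1 x) (hP2 : ∀ x, 0 < P2 x)
    (hsum : ∑ x, P1 x = ∑ x, P2 x) {r : ℝ} (hr : 0 < r) :
    MonotoneOn (fun t => r / t * KL (mixture P1 P2 t) (mixture P1 P2 (r * t / (t + r))))
      (Ioo 0 1) := by
  rintro s ⟨hs₀, hs₁⟩ t ⟨ht₀, ht₁⟩ hst
  rcases hst.eq_or_lt with rfl | hst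
  · rfl
  set Q := mixture P1 P2
  set μ := r * s / (t + r) with hμ
  have hμ₀ : 0 < μ := by positivity
  have hμs : μ < r * s / (s + r) :=
    div_lt_div_of_pos_left (by positivity) (by positivity) (by linarith)
  have hls : r * s / (s + r) < s := by rw [div_lt_iff₀ (by positivity)]; nlinarith
  have hlt₀ : 0 < r * t / (t + r) := by positivity
  have hlt : r * t / (t + r) < t := by rw [div_lt_iff₀ (by positivity)]; nlinarith
  have hshrink : KL (Q s) (Q μ) ≤ s / t * KL (Q t) (Q (r * t / (t + r))) :=
    KL_mixture_le hP1 hP2 (a := t) (b := r * t / (t + r)) (c := 0) ⟨ht₀.le, ht₁.le⟩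
      ⟨hlt₀.le, by linarith⟩ ⟨le_rfl, zero_le_one⟩ (by positivity)
      ((div_le_one ht₀).2 hst.le) (by field_simp; ring) (by rw [hμ]; field_simp; ring)
  have hpull :
      KL (Q s) (Q (r * s / (s + r))) ≤ (s - r * s / (s + r)) / (s - μ) * KL (Q s) (Q μ) :=
    KL_mixture_le hP1 hP2 (a := s) (b := μ) (c := s) ⟨hs₀.le, hs₁.le⟩ ⟨hμ₀.le, by linarith⟩
      ⟨hs₀.le, hs₁.le⟩ (div_pos (by linarith) (by linarith))
      ((div_le_one (by linarith)).2 (by linarith)) (by ring)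
      (by field_simp [(by linarith : s - μ ≠ 0)]; ring)
  have hgibbs : 0 ≤ KL (Q s) (Q μ) :=
    KL_nonneg (mixture_pos hP1 hP2 ⟨hs₀.le, hs₁.le⟩) (mixture_pos hP1 hP2 ⟨hμ₀.le, by linarith⟩)
      (by rw [sum_mixture hsum, sum_mixture hsum])
  calc r / s * KL (Q s) (Q (r * s / (s + r)))
      ≤ r / s * KL (Q s) (Q μ) :=
        mul_le_mul_of_nonneg_left (hpull.trans (mul_le_of_le_one_left hgibbs
          ((div_le_one (by linarith)).2 (by linarith)))) (by positivity)
    _ ≤ r / s * (s / t * KL (Q t) (Q (r * t / (t + r)))) :=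
        mul_le_mul_of_nonneg_left hshrink (by positivity)
    _ = r / t * KL (Q t) (Q (r * t / (t + r))) := by field_simp

end Mixture

theorem scaled_kl_monotoneOn_general
    (P1 P2 : X → ℝ) (hP1 : IsProbDist P1) (hP2 : IsProbDist P2)
    (hP1pos : ∀ x, 0 < P1 x) (hP2pos : ∀ x, 0 < P2 x)
    {r' : ℝ} (hr' : 0 < r') :
    MonotoneOn
      (fun t : ℝ => (r' / t) *
        KL (fun x => t * P1 x + (1 - t) * P2 x)
          (fun x => (r' * (t * P1 x + (1 - t) * P2 x) + t * P2 x) / (t + r')))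
      (Set.Ioo (0 : ℝ) 1) := by
  refine (monotoneOn_div_mul_KL_mixture hP1pos hP2pos (hP1.2.trans hP2.2.symm) hr').congr ?_
  intro t ht
  have htr : t + r' ≠ 0 := by linarith [ht.1]
  have htarget : mixture P1 P2 (r' * t / (t + r'))
      = fun x => (r' * (t * P1 x + (1 - t) * P2 x) + t * P2 x) / (t + r') := by
    funext x
    simp only [mixture]
    field_simp
    ring
  simp only [htarget]
  rfl

/-- `t ↦ (r'/t)·D(t·P1+(1−t)·P2 ‖ (r'·(t·P1+(1−t)·P2)+t·P2)/(t+r'))` is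
monotonically nondecreasing on `(0,1)`. -/
theorem scaled_kl_monotoneOn [Nonempty X]
    (P1 P2 : X → ℝ) (hP1 : IsProbDist P1) (hP2 : IsProbDist P2)
    (hP1pos : ∀ x, 0 < P1 x) (hP2pos : ∀ x, 0 < P2 x)
    {r' : ℝ} (hr' : 0 < r') :
    MonotoneOn
      (fun t : ℝ => (r' / t) *
        KL (fun x => t * P1 x + (1 - t) * P2 x)
          (fun x => (r' * (t * P1 x + (1 - t) * P2 x) + t * P2 x) / (t + r')))
      (Set.Ioo (0 : ℝ) 1) :=
  scaled_kl_monotoneOn_general P1 P2 hP1 hP2 hP1pos hP2pos hr'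

end StmtNS
end

section
/- Let 𝒳 be a nonempty finite set, let P1 ≠ P2 be full-support probability distributions on 𝒳, let θ ∈ (0,1/2) and r > 0. For s ∈ [θ,1−θ], λ ∈ [0,1] and Q_λ = λ·P1 + (1−λ)·P2, define V(s,λ) = s·Var_{X∼Q_λ}[ log( (s+r)·Q_λ(X) / (s·Q_λ(X) + r·P2(X)) ) ] + r·Var_{X∼P2}[ log( (s+r)·P2(X) / (s·Q_λ(X) + r·P2(X)) ) ]. Then V(s,λ) > 0 for every s ∈ [θ,1−θ] and every λ ∈ (0,1]; moreover, for every δ ∈ (0,1] there exists a constant a > 0 (depending only on θ, r, δ, P1, P2) such that V(s,λ) ≥ a for all s ∈ [θ,1−θ] and all λ ∈ [δ,1]. -/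
/-!
Both variances are nonnegative, and the first vanishes only if the log-ratio
`log ((s + r) Q_λ / (s Q_λ + r P2))` is constant, say `c`. Summing the identity
`(s + r) Q_λ = e^c (s Q_λ + r P2)` over `X` gives `e^c = 1`, hence `Q_λ = P2`, i.e. `P1 = P2` as
`λ > 0`. The uniform bound is the minimum of the continuous function `V` on the compact rectangle
`[θ, 1 - θ] × [δ, 1]`, where it is positive.
-/

namespace StmtNS

variable {X : Type*} [Fintype X]

/-- Expectation of `f` under the distribution `Q`. -/
noncomputable def expect (Q f : X → ℝ) : ℝ := ∑ x, Q x * f x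

/-- Variance of `f(X)` for `X ∼ Q`. -/
noncomputable def varD (Q f : X → ℝ) : ℝ := expect Q (fun x => f x ^ 2) - (expect Q f) ^ 2

/-- Third absolute central moment of `f(X)` for `X ∼ Q`. -/
noncomputable def absMom3 (Q f : X → ℝ) : ℝ := ∑ x, Q x * |f x - expect Q f| ^ 3

/-- The mixture `Q_λ = λ·P1 + (1−λ)·P2`. -/
noncomputable def mix (P1 P2 : X → ℝ) (lam : ℝ) : X → ℝ :=
  fun x => lam * P1 x + (1 - lam) * P2 x

/-- The variance-like quantity `V(s,λ)`. -/
noncomputable def Vfun (P1 P2 : X → ℝ) (r s lam : ℝ) : ℝ :=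
  s * varD (mix P1 P2 lam)
      (fun x => Real.log ((s + r) * mix P1 P2 lam x / (s * mix P1 P2 lam x + r * P2 x))) +
    r * varD P2
      (fun x => Real.log ((s + r) * P2 x / (s * mix P1 P2 lam x + r * P2 x)))

/-- The third-absolute-moment analogue `T(s,λ)`. -/
noncomputable def Tfun (P1 P2 : X → ℝ) (r s lam : ℝ) : ℝ :=
  s * absMom3 (mix P1 P2 lam)
      (fun x => Real.log ((s + r) * mix P1 P2 lam x / (s * mix P1 P2 lam x + r * P2 x))) +
    r * absMom3 P2
      (fun x => Real.log ((s + r) * P2 x / (s * mix P1 P2 lam x + r * P2 x)))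


end StmtNS

namespace StmtNS

variable {X : Type*}

lemma mix_pos {P1 P2 : X → ℝ} (hP1pos : ∀ x, 0 < P1 x) (hP2pos : ∀ x, 0 < P2 x) {lam : ℝ}
    (h0 : 0 ≤ lam) (h1 : lam ≤ 1) (x : X) : 0 < mix P1 P2 lam x := by
  have := hP1pos x
  have := hP2pos x
  unfold mix
  rcases h0.eq_or_lt with rfl | h0
  · simpa
  · nlinarith

lemma eq_of_mix_eq_right {P1 P2 : X → ℝ} {lam : ℝ} (hlam : lam ≠ 0) (h : mix P1 P2 lam = P2) :
    P1 = P2 := by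
  funext x
  have hx := congrFun h x
  simp only [mix] at hx
  exact mul_left_cancel₀ hlam (by linarith)

variable [Fintype X]

lemma varD_eq_sum_sq_sub {Q : X → ℝ} (hQ : ∑ x, Q x = 1) (f : X → ℝ) :
    varD Q f = ∑ x, Q x * (f x - expect Q f) ^ 2 := by
  have h : ∀ x, Q x * (f x - expect Q f) ^ 2
      = Q x * f x ^ 2 - (2 * expect Q f) * (Q x * f x) + expect Q f ^ 2 * Q x :=
    fun x => by ring
  simp_rw [h, Finset.sum_add_distrib, Finset.sum_sub_distrib, ← Finset.mul_sum, hQ]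
  simp only [varD, expect]
  ring

lemma varD_nonneg {Q : X → ℝ} (hQ : ∑ x, Q x = 1) (hQ0 : ∀ x, 0 ≤ Q x) (f : X → ℝ) :
    0 ≤ varD Q f := by
  rw [varD_eq_sum_sq_sub hQ]
  exact Finset.sum_nonneg fun x _ => mul_nonneg (hQ0 x) (sq_nonneg _)

lemma varD_pos {Q f : X → ℝ} (hQ : ∑ x, Q x = 1) (hQpos : ∀ x, 0 < Q x)
    (hf : ∃ x, f x ≠ expect Q f) : 0 < varD Q f := by
  obtain ⟨x₀, hx₀⟩ := hf
  rw [varD_eq_sum_sq_sub hQ]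
  exact Finset.sum_pos' (fun x _ => mul_nonneg (hQpos x).le (sq_nonneg _))
    ⟨x₀, Finset.mem_univ _, mul_pos (hQpos x₀) (pow_two_pos_of_ne_zero (sub_ne_zero.2 hx₀))⟩

lemma sum_mix {P1 P2 : X → ℝ} (hP1 : ∑ x, P1 x = 1) (hP2 : ∑ x, P2 x = 1) (lam : ℝ) :
    ∑ x, mix P1 P2 lam x = 1 := by
  simp only [mix, Finset.sum_add_distrib, ← Finset.mul_sum, hP1, hP2]
  ring

lemma eq_of_log_ratio_eq_const {Q P : X → ℝ} (hQ : ∑ x, Q x = 1) (hP : ∑ x, P x = 1)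
    (hQpos : ∀ x, 0 < Q x) (hPpos : ∀ x, 0 < P x) {r s c : ℝ} (hr : 0 < r) (hs : 0 ≤ s)
    (h : ∀ x, Real.log ((s + r) * Q x / (s * Q x + r * P x)) = c) : Q = P := by
  have hsr : 0 < s + r := by linarith
  have hden : ∀ x, 0 < s * Q x + r * P x := fun x => by
    have := hQpos x; have := hPpos x; positivity
  have hpoint : ∀ x, (s + r) * Q x = Real.exp c * (s * Q x + r * P x) := fun x => by
    rw [← h x, Real.exp_log (div_pos (mul_pos hsr (hQpos x)) (hden x)),
      div_mul_cancel₀ _ (hden x).ne']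
  have hexp : Real.exp c = 1 := by
    have hsum := Finset.sum_congr rfl fun x (_ : x ∈ Finset.univ) => hpoint x
    simp only [← Finset.mul_sum, mul_add, Finset.sum_add_distrib, ← mul_assoc] at hsum
    rw [hQ, hP] at hsum
    nlinarith
  funext x
  have := hpoint x
  rw [hexp, one_mul] at this
  exact mul_left_cancel₀ hr.ne' (by linarith)

lemma Vfun_pos {P1 P2 : X → ℝ} (hP1 : ∑ x, P1 x = 1) (hP2 : ∑ x, P2 x = 1)
    (hP1pos : ∀ x, 0 < P1 x) (hP2pos : ∀ x, 0 < P2 x) (hne : P1 ≠ P2)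
    {r s lam : ℝ} (hr : 0 < r) (hs : 0 < s) (hlam : lam ∈ Set.Ioc (0 : ℝ) 1) :
    0 < Vfun P1 P2 r s lam := by
  have hQpos := mix_pos hP1pos hP2pos hlam.1.le hlam.2
  have hQ := sum_mix hP1 hP2 lam
  unfold Vfun
  refine add_pos_of_pos_of_nonneg (mul_pos hs (varD_pos hQ hQpos ?_))
    (mul_nonneg hr.le (varD_nonneg hP2 (fun x => (hP2pos x).le) _))
  by_contra! hconst
  exact hne (eq_of_mix_eq_right hlam.1.ne'
    (eq_of_log_ratio_eq_const hQ hP2 hQpos hP2pos hr hs.le hconst))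

section Continuity

variable {α : Type*} [TopologicalSpace α] {K : Set α}

lemma continuousOn_varD {Q f : α → X → ℝ} (hQ : ∀ x, ContinuousOn (fun p => Q p x) K)
    (hf : ∀ x, ContinuousOn (fun p => f p x) K) :
    ContinuousOn (fun p => varD (Q p) (f p)) K := by
  unfold varD expect
  fun_prop

lemma continuousOn_log_div {g h : α → ℝ} (hg : ContinuousOn g K) (hh : ContinuousOn h K)
    (hg0 : ∀ p ∈ K, 0 < g p) (hh0 : ∀ p ∈ K, 0 < h p) :
    ContinuousOn (fun p => Real.log (g p / h p)) K :=
  (hg.div hh fun p hp => (hh0 p hp).ne').log fun p hp => (div_pos (hg0 p hp) (hh0 p hp)).ne'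

end Continuity

lemma Vfun_continuousOn {P1 P2 : X → ℝ} (hP1pos : ∀ x, 0 < P1 x) (hP2pos : ∀ x, 0 < P2 x)
    {r : ℝ} (hr : 0 < r) :
    ContinuousOn (fun p : ℝ × ℝ => Vfun P1 P2 r p.1 p.2) (Set.Ici 0 ×ˢ Set.Icc 0 1) := by
  have hQpos : ∀ p ∈ Set.Ici (0 : ℝ) ×ˢ Set.Icc (0 : ℝ) 1, ∀ x, 0 < mix P1 P2 p.2 x :=
    fun p hp => mix_pos hP1pos hP2pos hp.2.1 hp.2.2
  have hQ : ∀ x, Continuous fun p : ℝ × ℝ => mix P1 P2 p.2 x := fun x => by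
    unfold mix; fun_prop
  have hden : ∀ x, Continuous fun p : ℝ × ℝ => p.1 * mix P1 P2 p.2 x + r * P2 x :=
    fun x => (continuous_fst.mul (hQ x)).add continuous_const
  have hden0 : ∀ x, ∀ p ∈ Set.Ici (0 : ℝ) ×ˢ Set.Icc (0 : ℝ) 1,
      0 < p.1 * mix P1 P2 p.2 x + r * P2 x := fun x p hp => by
    have := hQpos p hp x; have := hP2pos x; have : (0 : ℝ) ≤ p.1 := hp.1; positivity
  unfold Vfun
  refine (continuousOn_fst.mul (continuousOn_varD (fun x => (hQ x).continuousOn)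
    fun x => continuousOn_log_div ?_ (hden x).continuousOn ?_ (hden0 x))).add
    (continuousOn_const.mul (continuousOn_varD (fun _ => continuousOn_const)
    fun x => continuousOn_log_div ?_ (hden x).continuousOn ?_ (hden0 x)))
  · exact ((continuous_fst.add continuous_const).mul (hQ x)).continuousOn
  · exact fun p hp => mul_pos (by linarith [hp.1.out]) (hQpos p hp x)
  · exact ((continuous_fst.add continuous_const).mul continuous_const).continuousOn
  · exact fun p hp => mul_pos (by linarith [hp.1.out]) (hP2pos x)

theorem V_pos_and_uniformly_bounded_below_general
    (P1 P2 : X → ℝ) (hP1 : IsProbDist P1) (hP2 : IsProbDist P2)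
    (hP1pos : ∀ x, 0 < P1 x) (hP2pos : ∀ x, 0 < P2 x) (hne : P1 ≠ P2)
    {r θ : ℝ} (hr : 0 < r) (hθ : θ ∈ Set.Ioo (0 : ℝ) (1 / 2)) :
    (∀ s ∈ Set.Icc θ (1 - θ), ∀ lam ∈ Set.Ioc (0 : ℝ) 1, 0 < Vfun P1 P2 r s lam) ∧
    ∀ δ ∈ Set.Ioc (0 : ℝ) 1, ∃ a > 0,
      ∀ s ∈ Set.Icc θ (1 - θ), ∀ lam ∈ Set.Icc δ 1, a ≤ Vfun P1 P2 r s lam := by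
  have hpos : ∀ s ∈ Set.Icc θ (1 - θ), ∀ lam ∈ Set.Ioc (0 : ℝ) 1, 0 < Vfun P1 P2 r s lam :=
    fun s hs lam hlam => Vfun_pos hP1.2 hP2.2 hP1pos hP2pos hne hr (hθ.1.trans_le hs.1) hlam
  refine ⟨hpos, fun δ hδ => ?_⟩
  have hK : IsCompact (Set.Icc θ (1 - θ) ×ˢ Set.Icc δ 1) := isCompact_Icc.prod isCompact_Icc
  have hKsub : Set.Icc θ (1 - θ) ×ˢ Set.Icc δ 1 ⊆ Set.Ici 0 ×ˢ Set.Icc 0 1 :=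
    Set.prod_mono (fun s hs => hθ.1.le.trans hs.1) (Set.Icc_subset_Icc_left hδ.1.le)
  obtain ⟨a, ha, hle⟩ := hK.exists_forall_le' ((Vfun_continuousOn hP1pos hP2pos hr).mono hKsub)
    fun p hp => hpos p.1 hp.1 p.2 ⟨hδ.1.trans_le hp.2.1, hp.2.2⟩
  exact ⟨a, ha, fun s hs lam hlam => hle (s, lam) ⟨hs, hlam⟩⟩

/-- `V(s,λ) > 0` for `s ∈ [θ,1−θ]`, `λ ∈ (0,1]`, and for every `δ ∈ (0,1]`
there is a uniform positive lower bound on `V(s,λ)` over `s ∈ [θ,1−θ]`, `λ ∈ [δ,1]`. -/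
theorem V_pos_and_uniformly_bounded_below [Nonempty X]
    (P1 P2 : X → ℝ) (hP1 : IsProbDist P1) (hP2 : IsProbDist P2)
    (hP1pos : ∀ x, 0 < P1 x) (hP2pos : ∀ x, 0 < P2 x) (hne : P1 ≠ P2)
    {r θ : ℝ} (hr : 0 < r) (hθ : θ ∈ Set.Ioo (0 : ℝ) (1 / 2)) :
    (∀ s ∈ Set.Icc θ (1 - θ), ∀ lam ∈ Set.Ioc (0 : ℝ) 1, 0 < Vfun P1 P2 r s lam) ∧
    ∀ δ ∈ Set.Ioc (0 : ℝ) 1, ∃ a > 0,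
      ∀ s ∈ Set.Icc θ (1 - θ), ∀ lam ∈ Set.Icc δ 1, a ≤ Vfun P1 P2 r s lam :=
  V_pos_and_uniformly_bounded_below_general P1 P2 hP1 hP2 hP1pos hP2pos hne hr hθ

end StmtNS
end
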